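/- Let g₁, g₂ be Lie algebras over C with g₁ of countable dimension, and let V be a finite dimensional irreducible module over g₁ ⊕ g₂. Then V ≅ V₁ ⊗ V₂ where V₁ is an irreducible g₁-submodule of V and V₂ = Hom_{g₁}(V₁, V) carries the irreducible g₂-action (y·f)(v) = y·(f(v)). -/

import Mathlib

open scoped TensorProduct

attribute [local instance 100] LieRing.ofAssociativeRing

/-!
Evaluation `V₁ ⊗ W → V`, `v ⊗ f ↦ f v`, on a nonzero `g₂`-stable space `W` of `g₁`-intertwiners
has a `g₁ ⊕ g₂`-stable image, hence is onto by irreducibility of `V`. For `W = Hom_{g₁}(V₁, V)` it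
is also injective. By induction on the number of linearly independent intertwiners `fᵢ`, the
relations `∑ fᵢ (vᵢ) = 0` form an invariant subspace of `V₁ⁿ` projecting injectively to the last
coordinate; if it is nonzero, that projection is onto, and Schur's lemma applied to the other
coordinates makes it consist of the vectors `(cᵢ v)ᵢ`, i.e. `∑ cᵢ fᵢ = 0`. Counting dimensions,
`dim V₁ · dim W ≥ dim V = dim V₁ · dim Hom_{g₁}(V₁, V)`, so `Hom_{g₁}(V₁, V)` is irreducible.
-/

section

variable {R ι M N : Type*} [CommSemiring R] [AddCommMonoid M] [Module R M]
  [AddCommMonoid N] [Module R N]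

def intertwiners (ψ : ι → Module.End R M) (Ψ : ι → Module.End R N) :
    Submodule R (M →ₗ[R] N) where
  carrier := {f | ∀ i m, f (ψ i m) = Ψ i (f m)}
  add_mem' hf hg i m := by simp [hf i m, hg i m]
  zero_mem' i m := by simp
  smul_mem' c f hf i m := by simp [hf i m]

variable {ψ : ι → Module.End R M} {Ψ : ι → Module.End R N}

theorem comp_mem_intertwiners {T : Module.End R N} (hT : ∀ i, Commute (Ψ i) T)
    {f : M →ₗ[R] N} (hf : f ∈ intertwiners ψ Ψ) : T ∘ₗ f ∈ intertwiners ψ Ψ := fun i m => by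
  simpa [hf i m] using (LinearMap.congr_fun (hT i).eq (f m)).symm

def evalTensor (W : Submodule R (M →ₗ[R] N)) : M ⊗[R] W →ₗ[R] N :=
  TensorProduct.lift W.subtype.flip

@[simp]
theorem evalTensor_tmul (W : Submodule R (M →ₗ[R] N)) (m : M) (f : W) :
    evalTensor W (m ⊗ₜ f) = (f : M →ₗ[R] N) m :=
  rfl

theorem apply_mem_range_evalTensor {W : Submodule R (M →ₗ[R] N)} {T : Module.End R N}
    (hT : ∀ m (f : W), T ((f : M →ₗ[R] N) m) ∈ LinearMap.range (evalTensor W)) :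
    ∀ n ∈ LinearMap.range (evalTensor W), T n ∈ LinearMap.range (evalTensor W) := by
  rintro _ ⟨t, rfl⟩
  induction t using TensorProduct.induction_on with
  | zero => simp
  | tmul m f => exact hT m f
  | add t₁ t₂ h₁ h₂ => rw [map_add, map_add]; exact add_mem h₁ h₂

theorem evalTensor_surjective {κ : Type*} {Φ : κ → Module.End R N}
    (hirr : ∀ U : Submodule R N, (∀ i, ∀ v ∈ U, Ψ i v ∈ U) → (∀ k, ∀ v ∈ U, Φ k v ∈ U) →
      U = ⊥ ∨ U = ⊤)
    {W : Submodule R (M →ₗ[R] N)} (hW : W ≤ intertwiners ψ Ψ)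
    (hWΦ : ∀ k, ∀ f ∈ W, Φ k ∘ₗ f ∈ W) (hne : W ≠ ⊥) :
    Function.Surjective (evalTensor W) := by
  have hΨ i := apply_mem_range_evalTensor (T := Ψ i) fun m f => ⟨ψ i m ⊗ₜ f, hW f.2 i m⟩
  have hΦ k := apply_mem_range_evalTensor (T := Φ k) fun m f => ⟨m ⊗ₜ ⟨_, hWΦ k f f.2⟩, rfl⟩
  rw [← LinearMap.range_eq_top]
  refine (hirr _ hΨ hΦ).resolve_left fun hbot => ?_
  obtain ⟨f, hfW, hf⟩ := Submodule.exists_mem_ne_zero_of_ne_bot hne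
  refine hf (LinearMap.ext fun m => ?_)
  simpa using LinearMap.congr_fun (LinearMap.range_eq_bot.mp hbot) (m ⊗ₜ ⟨f, hfW⟩)

end

section

variable {K ι M N : Type*} [Field K] [AddCommGroup M] [Module K M] [AddCommGroup N] [Module K N]
  {ψ : ι → Module.End K M} {Ψ : ι → Module.End K N}

theorem restrict_eq_bot_or_eq_top {V : Type*} [AddCommGroup V] [Module K V]
    {φ : ι → Module.End K V} {V₁ : Submodule K V} (hinv : ∀ i, ∀ v ∈ V₁, φ i v ∈ V₁)
    (hirr : ∀ W ≤ V₁, (∀ i, ∀ v ∈ W, φ i v ∈ W) → W = ⊥ ∨ W = V₁)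
    (U : Submodule K V₁) (hU : ∀ i, ∀ v ∈ U, (φ i).restrict (hinv i) v ∈ U) :
    U = ⊥ ∨ U = ⊤ := by
  have hUinv : ∀ i, ∀ v ∈ U.map V₁.subtype, φ i v ∈ U.map V₁.subtype := by
    rintro i _ ⟨u, hu, rfl⟩
    exact ⟨_, hU i u hu, rfl⟩
  have hinj := Submodule.map_injective_of_injective V₁.injective_subtype
  rcases hirr _ (Submodule.map_subtype_le V₁ U) hUinv with h | h
  · exact .inl (hinj (h.trans (Submodule.map_bot _).symm))
  · exact .inr (hinj (h.trans (Submodule.map_subtype_top V₁).symm))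

variable [FiniteDimensional K M] [Nontrivial M]

theorem eq_of_le_of_evalTensor_surjective_of_injective {W W' : Submodule K (M →ₗ[K] N)}
    [FiniteDimensional K W'] (hle : W ≤ W')
    (hW : Function.Surjective (evalTensor W)) (hW' : Function.Injective (evalTensor W')) :
    W = W' := by
  have : FiniteDimensional K W := Submodule.finiteDimensional_of_le hle
  have : FiniteDimensional K N := Module.Finite.of_surjective _ hW
  have := (LinearMap.finrank_le_finrank_of_injective hW').trans
    (LinearMap.finrank_le_finrank_of_surjective hW)
  rw [Module.finrank_tensorProduct, Module.finrank_tensorProduct] at this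
  exact Submodule.eq_of_le_of_finrank_le hle (Nat.le_of_mul_le_mul_left this Module.finrank_pos)

variable [IsAlgClosed K]

theorem exists_eq_smul_id_of_mem_intertwiners
    (hirr : ∀ U : Submodule K M, (∀ i, ∀ v ∈ U, ψ i v ∈ U) → U = ⊥ ∨ U = ⊤)
    {σ : Module.End K M} (hσ : σ ∈ intertwiners ψ ψ) : ∃ c : K, σ = c • LinearMap.id := by
  obtain ⟨c, hc⟩ := Module.End.exists_eigenvalue σ
  have hinv : ∀ i, ∀ v ∈ σ.eigenspace c, ψ i v ∈ σ.eigenspace c := by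
    intro i v hv
    rw [Module.End.mem_eigenspace_iff] at hv ⊢
    rw [hσ, hv, map_smul]
  refine ⟨c, LinearMap.ext fun v => Module.End.mem_eigenspace_iff.mp ?_⟩
  exact ((hirr _ hinv).resolve_left hc).symm ▸ Submodule.mem_top

theorem eq_bot_or_exists_smul_mem {κ : Type*}
    (hirr : ∀ U : Submodule K M, (∀ i, ∀ v ∈ U, ψ i v ∈ U) → U = ⊥ ∨ U = ⊤)
    (S : Submodule K (κ → M)) (hS : ∀ i, ∀ w ∈ S, (fun k => ψ i (w k)) ∈ S)
    (j : κ) (hj : ∀ w ∈ S, w j = 0 → w = 0) :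
    S = ⊥ ∨ ∃ c : κ → K, c j = 1 ∧ ∀ m, (fun k => c k • m) ∈ S := by
  set p : S →ₗ[K] M := LinearMap.proj j ∘ₗ S.subtype
  have hp : Function.Injective p := by
    rw [← LinearMap.ker_eq_bot, eq_bot_iff]
    rintro ⟨w, hw⟩ hwj
    simpa using hj w hw hwj
  have hrange : ∀ i, ∀ m ∈ LinearMap.range p, ψ i m ∈ LinearMap.range p := by
    rintro i _ ⟨w, rfl⟩
    exact ⟨⟨_, hS i w w.2⟩, rfl⟩
  rcases hirr _ hrange with hbot | htop
  · left
    rw [LinearMap.range_eq_bot] at hbot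
    rw [eq_bot_iff]
    intro w hw
    simpa using hp (a₁ := ⟨w, hw⟩) (a₂ := 0) (by simp [hbot])
  · right
    set e := LinearEquiv.ofBijective p ⟨hp, LinearMap.range_eq_top.mp htop⟩
    have he_symm : ∀ m, (e.symm m : κ → M) j = m := e.apply_symm_apply
    have hσ : ∀ k, LinearMap.proj k ∘ₗ S.subtype ∘ₗ e.symm.toLinearMap ∈ intertwiners ψ ψ := by
      intro k i m
      have : e.symm (ψ i m) = ⟨_, hS i _ (e.symm m).2⟩ :=
        e.symm_apply_eq.mpr (congrArg (ψ i) (he_symm m)).symm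
      simp [this]
    choose c hc using fun k => exists_eq_smul_id_of_mem_intertwiners hirr (hσ k)
    have hcoord : ∀ k m, (e.symm m : κ → M) k = c k • m := fun k m =>
      LinearMap.congr_fun (hc k) m
    refine ⟨c, ?_, fun m => ?_⟩
    · obtain ⟨m, hm⟩ := exists_ne (0 : M)
      have := hcoord j m
      rw [he_symm] at this
      exact (smul_left_injective K hm (this.symm.trans (one_smul K m).symm))
    · convert (e.symm m).2 using 1
      exact funext fun k => (hcoord k m).symm

theorem injective_lsum_of_linearIndependent
    (hirr : ∀ U : Submodule K M, (∀ i, ∀ v ∈ U, ψ i v ∈ U) → U = ⊥ ∨ U = ⊤)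
    {n : ℕ} {f : Fin n → M →ₗ[K] N} (hf : ∀ k, f k ∈ intertwiners ψ Ψ)
    (hli : LinearIndependent K f) :
    Function.Injective (LinearMap.lsum K (fun _ => M) K f) := by
  induction n with
  | zero => exact Function.injective_of_subsingleton _
  | succ n ih =>
    set F := LinearMap.lsum K (fun _ => M) K f
    have hF : ∀ w, F w = ∑ k, f k (w k) := by simp [F]
    have hS : ∀ i, ∀ w ∈ LinearMap.ker F, (fun k => ψ i (w k)) ∈ LinearMap.ker F := by
      intro i w hw
      simp only [LinearMap.mem_ker, hF] at hw ⊢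
      simp only [hf _ i, ← map_sum, hw, map_zero]
    have hlast : ∀ w ∈ LinearMap.ker F, w (Fin.last n) = 0 → w = 0 := by
      intro w hw hwl
      have hinit : w ∘ Fin.castSucc = 0 :=
        ih (fun k => hf k.castSucc) (hli.comp _ (Fin.castSucc_injective n))
          (by simpa [hF, Fin.sum_univ_castSucc, hwl] using hw)
      funext k
      exact Fin.lastCases hwl (fun k => congrFun hinit k) k
    rw [← LinearMap.ker_eq_bot]
    refine (eq_bot_or_exists_smul_mem hirr _ hS _ hlast).resolve_right ?_
    rintro ⟨c, hc1, hc⟩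
    have : ∑ k, c k • f k = 0 := LinearMap.ext fun m => by simpa [hF] using hc m
    simpa [hc1] using Fintype.linearIndependent_iff.mp hli c this (Fin.last n)

theorem evalTensor_injective
    (hirr : ∀ U : Submodule K M, (∀ i, ∀ v ∈ U, ψ i v ∈ U) → U = ⊥ ∨ U = ⊤)
    {W : Submodule K (M →ₗ[K] N)} [FiniteDimensional K W] (hW : W ≤ intertwiners ψ Ψ) :
    Function.Injective (evalTensor W) := by
  set b := Module.finBasis K W
  rw [← LinearMap.ker_eq_bot, eq_bot_iff]
  intro t ht
  obtain ⟨w, rfl⟩ := TensorProduct.eq_repr_basis_right b t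
  have hli : LinearIndependent K fun k => (b k : M →ₗ[K] N) :=
    b.linearIndependent.map' W.subtype W.ker_subtype
  have hw : w = 0 := DFunLike.coe_injective <| injective_lsum_of_linearIndependent hirr
    (fun k => hW (b k).2) hli (by simpa [Finsupp.sum_fintype] using ht)
  simp [hw]

end

theorem stmt16_general {g₁ g₂ : Type*} [LieRing g₁] [LieAlgebra ℂ g₁]
    [LieRing g₂] [LieAlgebra ℂ g₂]
    (V : Type*) [AddCommGroup V] [Module ℂ V] [FiniteDimensional ℂ V]
    (φ₁ : g₁ →ₗ⁅ℂ⁆ Module.End ℂ V) (φ₂ : g₂ →ₗ⁅ℂ⁆ Module.End ℂ V)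
    (hcomm : ∀ (x : g₁) (y : g₂), Commute (φ₁ x) (φ₂ y))
    (hirr : ∀ W : Submodule ℂ V, (∀ x, ∀ v ∈ W, φ₁ x v ∈ W) →
      (∀ y, ∀ v ∈ W, φ₂ y v ∈ W) → W = ⊥ ∨ W = ⊤)
    (V₁ : Submodule ℂ V)
    (hinv : ∀ x : g₁, ∀ v ∈ V₁, φ₁ x v ∈ V₁)
    (hV₁ne : V₁ ≠ ⊥)
    (hV₁irr : ∀ W ≤ V₁, (∀ x, ∀ v ∈ W, φ₁ x v ∈ W) → W = ⊥ ∨ W = V₁) :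
    ∃ V₂ : Submodule ℂ (V₁ →ₗ[ℂ] V),
      (V₂ : Set (V₁ →ₗ[ℂ] V))
        = {f | ∀ (x : g₁) (v : V₁), f ⟨φ₁ x ↑v, hinv x ↑v v.2⟩ = φ₁ x (f v)} ∧
      (∀ y : g₂, ∀ f ∈ V₂, (φ₂ y) ∘ₗ f ∈ V₂) ∧
      V₂ ≠ ⊥ ∧
      (∀ W ≤ V₂, (∀ y : g₂, ∀ f ∈ W, (φ₂ y) ∘ₗ f ∈ W) → W = ⊥ ∨ W = V₂) ∧
      ∃ e : V₁ ⊗[ℂ] V₂ ≃ₗ[ℂ] V,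
        ∀ (v : V₁) (f : V₂), e (v ⊗ₜ f) = (f : V₁ →ₗ[ℂ] V) v := by
  have : Nontrivial V₁ := Submodule.nontrivial_iff_ne_bot.mpr hV₁ne
  set V₂ := intertwiners (fun x => (φ₁ x).restrict (hinv x)) φ₁
  have hstab : ∀ y : g₂, ∀ f ∈ V₂, φ₂ y ∘ₗ f ∈ V₂ := fun y _ hf =>
    comp_mem_intertwiners (fun x => hcomm x y) hf
  have hV₂ne : V₂ ≠ ⊥ := (Submodule.ne_bot_iff V₂).mpr ⟨V₁.subtype, fun _ _ => rfl,
    fun h => hV₁ne (by rw [← V₁.range_subtype, h, LinearMap.range_zero])⟩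
  have hsurj : ∀ W ≤ V₂, (∀ y : g₂, ∀ f ∈ W, φ₂ y ∘ₗ f ∈ W) → W ≠ ⊥ →
      Function.Surjective (evalTensor W) := fun _ hW hWstab => evalTensor_surjective hirr hW hWstab
  have hinj : Function.Injective (evalTensor V₂) :=
    evalTensor_injective (restrict_eq_bot_or_eq_top hinv hV₁irr) le_rfl
  refine ⟨V₂, rfl, hstab, hV₂ne, fun W hW hWstab => or_iff_not_imp_left.mpr fun hne =>
    eq_of_le_of_evalTensor_surjective_of_injective hW (hsurj W hW hWstab hne) hinj,
    LinearEquiv.ofBijective (evalTensor V₂) ⟨hinj, hsurj V₂ le_rfl hstab hV₂ne⟩, fun _ _ => rfl⟩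

/-- let `g₁, g₂` be Lie algebras over `ℂ` with `g₁` of countable
dimension, acting commutingly on a finite dimensional space `V` via `φ₁, φ₂`
(this is the action of `g₁ ⊕ g₂`), with `V` irreducible for the joint action.
If `V₁` is an irreducible `g₁`-submodule of `V`, then
`V₂ = Hom_{g₁}(V₁, V)` is stable under the `g₂`-action `(y·f)(v) = y·(f v)`,
is irreducible for it, and evaluation `v ⊗ f ↦ f v` is an isomorphism
`V₁ ⊗ V₂ ≅ V`. -/
theorem stmt16 {g₁ g₂ : Type*} [LieRing g₁] [LieAlgebra ℂ g₁]
    [LieRing g₂] [LieAlgebra ℂ g₂]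
    (V : Type*) [AddCommGroup V] [Module ℂ V] [FiniteDimensional ℂ V]
    (φ₁ : g₁ →ₗ⁅ℂ⁆ Module.End ℂ V) (φ₂ : g₂ →ₗ⁅ℂ⁆ Module.End ℂ V)
    (hcomm : ∀ (x : g₁) (y : g₂), Commute (φ₁ x) (φ₂ y))
    (hcount : ∃ s : Set g₁, s.Countable ∧ Submodule.span ℂ s = ⊤)
    [Nontrivial V]
    (hirr : ∀ W : Submodule ℂ V, (∀ x, ∀ v ∈ W, φ₁ x v ∈ W) →
      (∀ y, ∀ v ∈ W, φ₂ y v ∈ W) → W = ⊥ ∨ W = ⊤)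
    (V₁ : Submodule ℂ V)
    (hinv : ∀ x : g₁, ∀ v ∈ V₁, φ₁ x v ∈ V₁)
    (hV₁ne : V₁ ≠ ⊥)
    (hV₁irr : ∀ W ≤ V₁, (∀ x, ∀ v ∈ W, φ₁ x v ∈ W) → W = ⊥ ∨ W = V₁) :
    ∃ V₂ : Submodule ℂ (V₁ →ₗ[ℂ] V),
      (V₂ : Set (V₁ →ₗ[ℂ] V))
        = {f | ∀ (x : g₁) (v : V₁), f ⟨φ₁ x ↑v, hinv x ↑v v.2⟩ = φ₁ x (f v)} ∧
      (∀ y : g₂, ∀ f ∈ V₂, (φ₂ y) ∘ₗ f ∈ V₂) ∧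
      V₂ ≠ ⊥ ∧
      (∀ W ≤ V₂, (∀ y : g₂, ∀ f ∈ W, (φ₂ y) ∘ₗ f ∈ W) → W = ⊥ ∨ W = V₂) ∧
      ∃ e : V₁ ⊗[ℂ] V₂ ≃ₗ[ℂ] V,
        ∀ (v : V₁) (f : V₂), e (v ⊗ₜ f) = (f : V₁ →ₗ[ℂ] V) v :=
  stmt16_general V φ₁ φ₂ hcomm hirr V₁ hinv hV₁ne hV₁irr
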